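/- Let L be symmetric, D positive definite diagonal, λ₁ = min_{xᵀDx=1} xᵀLx attained by v₁, with λ₁ a simple generalized eigenvalue. If X* ⪰ 0 satisfies X* ∘ D = 1 and X* ∘ L = λ₁, then X* = v₁v₁ᵀ, a rank-one matrix. -/

import Mathlib

/-!
Put `M := L - λ₁ D`. The minimality of `λ₁` on the ellipsoid `xᵀDx = 1` makes `M` positive
semidefinite, and `X* ∘ M = X* ∘ L - λ₁ (X* ∘ D) = 0`. For positive semidefinite matrices
`tr (XM) = 0` forces `MX = 0` (write `X = PᴴP`, `M = QᴴQ`; then `tr (XM) = ‖PQᴴ‖²`), so every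
column of `X*` lies in `ker M`, which simplicity of `λ₁` makes the line through `v₁`. A symmetric
matrix with all columns on that line is `t v₁v₁ᵀ`, and `X* ∘ D = 1` gives `t = 1`.
-/

open Matrix

namespace Matrix

variable {ι κ K : Type*}

theorem exists_eq_smul_of_vecMulVec_eq_vecMulVec [Field K] {v c : ι → K} (hv : v ≠ 0)
    (h : vecMulVec v c = vecMulVec c v) : ∃ t : K, c = t • v := by
  obtain ⟨i, hi⟩ := Function.ne_iff.mp hv
  refine ⟨c i / v i, funext fun j ↦ ?_⟩
  have hij : v i * c j = c i * v j := congrFun (congrFun h i) j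
  rw [Pi.smul_apply, smul_eq_mul, div_mul_eq_mul_div, eq_div_iff hi]
  linear_combination hij

variable [Fintype ι]

open scoped ComplexOrder MatrixOrder in
theorem PosSemidef.mul_eq_zero_of_trace_mul_eq_zero {𝕜 : Type*} [RCLike 𝕜]
    {A B : Matrix ι ι 𝕜} (hA : A.PosSemidef) (hB : B.PosSemidef) (h : (A * B).trace = 0) :
    A * B = 0 := by
  classical
  obtain ⟨P, rfl⟩ := CStarAlgebra.nonneg_iff_eq_star_mul_self.mp hA.nonneg
  obtain ⟨Q, rfl⟩ := CStarAlgebra.nonneg_iff_eq_star_mul_self.mp hB.nonneg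
  rw [star_eq_conjTranspose, star_eq_conjTranspose] at h ⊢
  have hPQ : P * Qᴴ = 0 := by
    rw [← trace_conjTranspose_mul_self_eq_zero_iff, ← h, conjTranspose_mul,
      conjTranspose_conjTranspose, Matrix.mul_assoc, trace_mul_comm]
    simp only [Matrix.mul_assoc]
  calc Pᴴ * P * (Qᴴ * Q) = Pᴴ * (P * Qᴴ) * Q := by simp only [Matrix.mul_assoc]
    _ = 0 := by rw [hPQ, Matrix.mul_zero, Matrix.zero_mul]

theorem posSemidef_sub_smul_of_forall_le {L D : Matrix ι ι ℝ} (hL : L.IsSymm) (hD : D.PosDef)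
    {μ : ℝ} (hμ : ∀ x, x ⬝ᵥ D *ᵥ x = 1 → μ ≤ x ⬝ᵥ L *ᵥ x) : (L - μ • D).PosSemidef := by
  refine .of_dotProduct_mulVec_nonneg ?_ fun x ↦ ?_
  · exact (isHermitian_iff_isSymm.mpr hL).sub (hD.isHermitian.smul (IsSelfAdjoint.all μ))
  rcases eq_or_ne x 0 with rfl | hx
  · simp
  have hs : 0 < x ⬝ᵥ D *ᵥ x := by simpa using hD.dotProduct_mulVec_pos hx
  set s := x ⬝ᵥ D *ᵥ x
  have hquad (A : Matrix ι ι ℝ) (c : ℝ) : (c • x) ⬝ᵥ A *ᵥ (c • x) = c ^ 2 * (x ⬝ᵥ A *ᵥ x) := by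
    rw [mulVec_smul, smul_dotProduct, dotProduct_smul, smul_eq_mul, smul_eq_mul]; ring
  have hle := hμ ((√s)⁻¹ • x) (by rw [hquad, inv_pow, Real.sq_sqrt hs.le, inv_mul_cancel₀ hs.ne'])
  rw [hquad, inv_pow, Real.sq_sqrt hs.le, le_inv_mul_iff₀ hs] at hle
  simp only [star_trivial, sub_mulVec, smul_mulVec, dotProduct_sub, dotProduct_smul, smul_eq_mul]
  linarith

theorem exists_eq_vecMulVec_of_mul_eq_zero [CommSemiring K] {M : Matrix κ ι K}
    {X : Matrix ι ι K} {v : ι → K} (hker : ∀ w, M *ᵥ w = 0 → ∃ c : K, w = c • v)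
    (hMX : M * X = 0) : ∃ c : ι → K, X = vecMulVec v c := by
  have hcol (j : ι) : ∃ c : K, Xᵀ j = c • v :=
    hker _ (funext fun i ↦ congrFun (congrFun hMX i) j)
  choose c hc using hcol
  refine ⟨c, ext fun i j ↦ ?_⟩
  simpa [vecMulVec_apply, mul_comm] using congrFun (hc j) i

theorem trace_vecMulVec_mul [CommSemiring K] (u v : ι → K) (A : Matrix ι ι K) :
    (vecMulVec u v * A).trace = v ⬝ᵥ A *ᵥ u := by
  rw [vecMulVec_mul, trace_vecMulVec, dotProduct_comm, dotProduct_mulVec]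

end Matrix

theorem Xstar_eq_rank_one_general
    {n : ℕ} (L : Matrix (Fin n) (Fin n) ℝ) (hL : L.IsSymm)
    (d : Fin n → ℝ) (hd : ∀ i, 0 < d i)
    (D : Matrix (Fin n) (Fin n) ℝ) (hD : D = Matrix.diagonal d)
    (lam₁ : ℝ) (v₁ : Fin n → ℝ)
    (hv₁D : v₁ ⬝ᵥ D.mulVec v₁ = 1)
    (hmin : ∀ x : Fin n → ℝ, x ⬝ᵥ D.mulVec x = 1 → lam₁ ≤ x ⬝ᵥ L.mulVec x)
    (hsimple : ∀ v : Fin n → ℝ, L.mulVec v = lam₁ • D.mulVec v → ∃ c : ℝ, v = c • v₁)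
    (Xstar : Matrix (Fin n) (Fin n) ℝ) (hX : Xstar.PosSemidef)
    (hXD : (Xstar * D).trace = 1)
    (hXL : (Xstar * L).trace = lam₁) :
    Xstar = Matrix.vecMulVec v₁ v₁ := by
  have hDpos : D.PosDef := hD ▸ posDef_diagonal_iff.mpr hd
  have hM := posSemidef_sub_smul_of_forall_le hL hDpos hmin
  have hMX : (L - lam₁ • D) * Xstar = 0 := by
    refine hM.mul_eq_zero_of_trace_mul_eq_zero hX ?_
    rw [trace_mul_comm, Matrix.mul_sub, Matrix.mul_smul, trace_sub, trace_smul, hXL, hXD,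
      smul_eq_mul, mul_one, sub_self]
  have hker (w : Fin n → ℝ) (hw : (L - lam₁ • D) *ᵥ w = 0) : ∃ c : ℝ, w = c • v₁ :=
    hsimple w (by rwa [sub_mulVec, smul_mulVec, sub_eq_zero] at hw)
  obtain ⟨c, hc⟩ := exists_eq_vecMulVec_of_mul_eq_zero hker hMX
  have hv₁ : v₁ ≠ 0 := by
    rintro rfl
    simp at hv₁D
  obtain ⟨t, rfl⟩ := exists_eq_smul_of_vecMulVec_eq_vecMulVec (c := c) hv₁ <| by
    rw [← transpose_vecMulVec v₁ c, ← hc]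
    exact (isHermitian_iff_isSymm.mp hX.isHermitian).symm
  rw [hc, vecMulVec_smul, smul_mul, trace_smul, trace_vecMulVec_mul, hv₁D, smul_eq_mul,
    mul_one] at hXD
  rw [hc, hXD, one_smul]

theorem Xstar_eq_rank_one
    {n : ℕ} (L : Matrix (Fin n) (Fin n) ℝ) (hL : L.IsSymm)
    (d : Fin n → ℝ) (hd : ∀ i, 0 < d i)
    (D : Matrix (Fin n) (Fin n) ℝ) (hD : D = Matrix.diagonal d)
    (lam₁ : ℝ) (v₁ : Fin n → ℝ)
    (hv₁D : v₁ ⬝ᵥ D.mulVec v₁ = 1)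
    (hv₁eig : L.mulVec v₁ = lam₁ • D.mulVec v₁)
    (hmin : ∀ x : Fin n → ℝ, x ⬝ᵥ D.mulVec x = 1 → lam₁ ≤ x ⬝ᵥ L.mulVec x)
    (hsimple : ∀ v : Fin n → ℝ, L.mulVec v = lam₁ • D.mulVec v → ∃ c : ℝ, v = c • v₁)
    (Xstar : Matrix (Fin n) (Fin n) ℝ) (hX : Xstar.PosSemidef)
    (hXD : (Xstar * D).trace = 1)
    (hXL : (Xstar * L).trace = lam₁) :
    Xstar = Matrix.vecMulVec v₁ v₁ :=
  Xstar_eq_rank_one_general L hL d hd D hD lam₁ v₁ hv₁D hmin hsimple Xstar hX hXD hXL
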